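/- arXiv:1808.07600 — 2 statements merged into one kernel-verified Lean document; each statement's English description precedes it below -/
import Mathlib

section
/- Let p be an integer-valued supermodular set-function on the subsets of a nonempty finite set S with p(∅) = 0, and let m be an element of the M-convex set Ḃ(p). Then the following four conditions are pairwise equivalent: (A) there exist no elements s, t ∈ S such that m(t) ≥ m(s) + 2 and m + χ_s − χ_t ∈ Ḃ(p); (B) there exists a chain ∅ ⊊ C₁ ⊊ C₂ ⊊ ⋯ ⊊ C_ℓ = S such that each C_i is an m-top set and is m-tight with respect to p, and m is near-uniform on each difference set S_i := C_i ∖ C_{i−1} (where C₀ := ∅); (C1) m is decreasingly minimal in Ḃ(p); (C2) m is increasingly maximal in Ḃ(p). -/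
open Finset

variable {α : Type*}

/-- Integer-valued supermodular set-function. -/
def Supermodular [DecidableEq α] (p : Finset α → ℤ) : Prop :=
  ∀ X Y : Finset α, p X + p Y ≤ p (X ∩ Y) + p (X ∪ Y)

/-- The M-convex set `Ḃ(p)` of integral elements of the base-polyhedron `B'(p)`:
all `m : α → ℤ` with `m̃(X) ≥ p(X)` for every `X` and `m̃(S) = p(S)`. -/
def Bdot [Fintype α] (p : Finset α → ℤ) : Set (α → ℤ) :=
  {m | (∀ X : Finset α, p X ≤ ∑ s ∈ X, m s) ∧ (∑ s, m s) = p Finset.univ}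

/-- `x↓`: the values of `x` arranged in nonincreasing order. -/
def sortedDesc [Fintype α] (x : α → ℤ) : List ℤ :=
  ((Finset.univ.val.map x).sort (· ≤ ·)).reverse

/-- `x↑`: the values of `x` arranged in nondecreasing order. -/
def sortedAsc [Fintype α] (x : α → ℤ) : List ℤ :=
  (Finset.univ.val.map x).sort (· ≤ ·)

/-- `x ≤_dec y`: `x↓` is lexicographically less than or equal to `y↓`. -/
def DecLE [Fintype α] (x y : α → ℤ) : Prop :=
  sortedDesc x = sortedDesc y ∨ List.Lex (· < ·) (sortedDesc x) (sortedDesc y)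

/-- `x ≤_inc y`: `x↑` is lexicographically less than or equal to `y↑`. -/
def IncLE [Fintype α] (x y : α → ℤ) : Prop :=
  sortedAsc x = sortedAsc y ∨ List.Lex (· < ·) (sortedAsc x) (sortedAsc y)

/-- `m` is a decreasingly minimal element of `Bdot p`. -/
def DecMin [Fintype α] (p : Finset α → ℤ) (m : α → ℤ) : Prop :=
  m ∈ Bdot p ∧ ∀ y ∈ Bdot p, DecLE m y

/-!
Both orders are decided by the excess `θ ↦ ∑ₛ (m s - θ)⁺` and the deficit `θ ↦ ∑ₛ (θ - m s)⁺`: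
if `x↓` is lexicographically below `y↓`, then the excess of `x` is below that of `y` at the
threshold just under the entry of `y↓` where the two sequences first differ, and dually for `x↑`
and deficits.

A chain as in (B) yields, for every `θ`, an `m`-tight set `C` with `{m > θ} ⊆ C ⊆ {m ≥ θ}`; since
`m(C) = p(C) ≤ y(C)` for every `y ∈ Ḃ(p)`, the excess (deficit) of `m` is pointwise at most that
of `y`, which gives (C1) and (C2). A 1-tightening step lowers every excess and every deficit, one
of each strictly, so (C1) and (C2) each exclude it. Finally, without 1-tightening steps the
smallest tight set containing `{m ≥ θ}` lies inside `{m ≥ θ - 1}`: a point `s` with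
`m s ≤ θ - 2` could receive a unit from every `t` with `m t ≥ θ` unless some tight set contains
`t` but not `s`, and the union of these tight sets would exclude `s`. These closures, for
decreasing `θ`, form the chain of (B).
-/

theorem List.exists_sum_map_posPart_lt_of_lex {l₁ l₂ : List ℤ} (h₁ : l₁.Pairwise (· ≥ ·))
    (h : List.Lex (· < ·) l₁ l₂) :
    ∃ θ : ℤ, (l₁.map fun v => max (v - θ) 0).sum < (l₂.map fun v => max (v - θ) 0).sum := by
  have tail_nonneg (θ : ℤ) (l : List ℤ) : 0 ≤ (l.map fun v => max (v - θ) 0).sum :=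
    List.sum_nonneg (by simp)
  induction h with
  | @nil b t =>
    refine ⟨b - 1, ?_⟩
    simp only [List.map_nil, List.sum_nil, List.map_cons, List.sum_cons]
    have := tail_nonneg (b - 1) t
    omega
  | @rel a t₁ b t₂ hab =>
    refine ⟨b - 1, ?_⟩
    have hzero : ((a :: t₁).map fun v => max (v - (b - 1)) 0).sum = 0 := by
      refine List.sum_eq_zero fun w hw => ?_
      obtain ⟨v, hv, rfl⟩ := List.mem_map.1 hw
      have : v ≤ a := by
        rcases List.mem_cons.1 hv with rfl | hv
        exacts [le_rfl, (List.pairwise_cons.1 h₁).1 v hv]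
      omega
    rw [hzero, List.map_cons, List.sum_cons]
    have := tail_nonneg (b - 1) t₂
    omega
  | @cons a t₁ t₂ _ ih =>
    obtain ⟨θ, hθ⟩ := ih (List.pairwise_cons.1 h₁).2
    refine ⟨θ, ?_⟩
    simp only [List.map_cons, List.sum_cons]
    linarith

theorem List.exists_sum_map_negPart_lt_of_lex {l₁ l₂ : List ℤ} (h₂ : l₂.Pairwise (· ≤ ·))
    (hlen : l₁.length = l₂.length) (h : List.Lex (· < ·) l₁ l₂) :
    ∃ θ : ℤ, (l₂.map fun v => max (θ - v) 0).sum < (l₁.map fun v => max (θ - v) 0).sum := by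
  have tail_nonneg (θ : ℤ) (l : List ℤ) : 0 ≤ (l.map fun v => max (θ - v) 0).sum :=
    List.sum_nonneg (by simp)
  induction h with
  | nil => simp at hlen
  | @rel a t₁ b t₂ hab =>
    refine ⟨a + 1, ?_⟩
    have hzero : ((b :: t₂).map fun v => max (a + 1 - v) 0).sum = 0 := by
      refine List.sum_eq_zero fun w hw => ?_
      obtain ⟨v, hv, rfl⟩ := List.mem_map.1 hw
      have : b ≤ v := by
        rcases List.mem_cons.1 hv with rfl | hv
        exacts [le_rfl, (List.pairwise_cons.1 h₂).1 v hv]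
      omega
    rw [hzero, List.map_cons, List.sum_cons]
    have := tail_nonneg (a + 1) t₁
    omega
  | @cons a t₁ t₂ _ ih =>
    obtain ⟨θ, hθ⟩ := ih (List.pairwise_cons.1 h₂).2 (by simpa using hlen)
    refine ⟨θ, ?_⟩
    simp only [List.map_cons, List.sum_cons]
    linarith

section Majorization

variable [Fintype α]

def excess (x : α → ℤ) (θ : ℤ) : ℤ := ∑ s, max (x s - θ) 0

def deficit (x : α → ℤ) (θ : ℤ) : ℤ := ∑ s, max (θ - x s) 0

theorem sum_map_sortedAsc (x : α → ℤ) (f : ℤ → ℤ) : ((sortedAsc x).map f).sum = ∑ s, f (x s) := by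
  rw [← Multiset.sum_coe, ← Multiset.map_coe, sortedAsc, Multiset.sort_eq, Multiset.map_map]
  rfl

theorem sum_map_sortedDesc (x : α → ℤ) (f : ℤ → ℤ) :
    ((sortedDesc x).map f).sum = ∑ s, f (x s) := by
  rw [sortedDesc, List.map_reverse, List.sum_reverse]
  exact sum_map_sortedAsc x f

theorem exists_excess_lt_of_lex {x y : α → ℤ}
    (h : List.Lex (· < ·) (sortedDesc x) (sortedDesc y)) : ∃ θ, excess x θ < excess y θ := by
  have hsorted : (sortedDesc x).Pairwise (· ≥ ·) :=
    List.pairwise_reverse.2 (Multiset.pairwise_sort _ _)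
  simpa only [excess, sum_map_sortedDesc] using List.exists_sum_map_posPart_lt_of_lex hsorted h

theorem exists_deficit_lt_of_lex {x y : α → ℤ}
    (h : List.Lex (· < ·) (sortedAsc x) (sortedAsc y)) : ∃ θ, deficit y θ < deficit x θ := by
  have hlen : (sortedAsc x).length = (sortedAsc y).length := by simp [sortedAsc]
  have hsorted : (sortedAsc y).Pairwise (· ≤ ·) := Multiset.pairwise_sort _ _
  simpa only [deficit, sum_map_sortedAsc] using
    List.exists_sum_map_negPart_lt_of_lex hsorted hlen h

theorem decLE_of_forall_excess_le {x y : α → ℤ} (h : ∀ θ, excess x θ ≤ excess y θ) :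
    DecLE x y := by
  rcases trichotomous_of (List.Lex (· < ·)) (sortedDesc x) (sortedDesc y) with hxy | hxy | hyx
  · exact Or.inr hxy
  · exact Or.inl hxy
  · obtain ⟨θ, hθ⟩ := exists_excess_lt_of_lex hyx
    exact absurd (h θ) hθ.not_ge

theorem not_decLE_of_excess_lt {x y : α → ℤ} (h : ∀ θ, excess y θ ≤ excess x θ) {θ : ℤ}
    (hθ : excess y θ < excess x θ) : ¬ DecLE x y := by
  rintro (hxy | hxy)
  · have : excess x θ = excess y θ := by
      simpa only [excess, sum_map_sortedDesc] using
        congrArg (fun l => (l.map fun v => max (v - θ) 0).sum) hxy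
    exact hθ.ne this.symm
  · obtain ⟨θ', hθ'⟩ := exists_excess_lt_of_lex hxy
    exact (h θ').not_gt hθ'

theorem incLE_of_forall_deficit_le {x y : α → ℤ} (h : ∀ θ, deficit x θ ≤ deficit y θ) :
    IncLE y x := by
  rcases trichotomous_of (List.Lex (· < ·)) (sortedAsc y) (sortedAsc x) with hyx | hyx | hxy
  · exact Or.inr hyx
  · exact Or.inl hyx
  · obtain ⟨θ, hθ⟩ := exists_deficit_lt_of_lex hxy
    exact absurd (h θ) hθ.not_ge

theorem not_incLE_of_deficit_lt {x y : α → ℤ} (h : ∀ θ, deficit x θ ≤ deficit y θ) {θ : ℤ}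
    (hθ : deficit x θ < deficit y θ) : ¬ IncLE x y := by
  rintro (hxy | hxy)
  · have : deficit x θ = deficit y θ := by
      simpa only [deficit, sum_map_sortedAsc] using
        congrArg (fun l => (l.map fun v => max (θ - v) 0).sum) hxy
    exact hθ.ne this
  · obtain ⟨θ', hθ'⟩ := exists_deficit_lt_of_lex hxy
    exact (h θ').not_gt hθ'

theorem excess_le_excess_of_sum_le {x y : α → ℤ} {θ : ℤ} {D : Finset α}
    (hgt : ∀ s, θ < x s → s ∈ D) (hge : ∀ s ∈ D, θ ≤ x s)
    (hsum : ∑ s ∈ D, x s ≤ ∑ s ∈ D, y s) : excess x θ ≤ excess y θ := by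
  have hD : excess x θ = ∑ s ∈ D, (x s - θ) := by
    rw [excess, ← Finset.sum_subset (Finset.subset_univ D) fun s _ hs => ?_]
    · exact Finset.sum_congr rfl fun s hs => max_eq_left (sub_nonneg.2 (hge s hs))
    · exact max_eq_right (sub_nonpos.2 (not_lt.1 (mt (hgt s) hs)))
  calc excess x θ = ∑ s ∈ D, (x s - θ) := hD
    _ ≤ ∑ s ∈ D, (y s - θ) := by
      simp only [Finset.sum_sub_distrib]
      linarith
    _ ≤ ∑ s ∈ D, max (y s - θ) 0 := Finset.sum_le_sum fun s _ => le_max_left _ _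
    _ ≤ excess y θ :=
      Finset.sum_le_sum_of_subset_of_nonneg (Finset.subset_univ D) fun s _ _ => le_max_right _ _

theorem deficit_eq_excess_neg (x : α → ℤ) (θ : ℤ) : deficit x θ = excess (-x) (-θ) := by
  simp only [deficit, excess, Pi.neg_apply, neg_sub_neg]

theorem deficit_le_deficit_of_sum_le {x y : α → ℤ} {θ : ℤ} {K : Finset α}
    (hlt : ∀ s, x s < θ → s ∈ K) (hle : ∀ s ∈ K, x s ≤ θ)
    (hsum : ∑ s ∈ K, y s ≤ ∑ s ∈ K, x s) : deficit x θ ≤ deficit y θ := by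
  rw [deficit_eq_excess_neg, deficit_eq_excess_neg]
  refine excess_le_excess_of_sum_le (fun s hs => hlt s (neg_lt_neg_iff.1 hs))
    (fun s hs => neg_le_neg (hle s hs)) ?_
  simpa only [Pi.neg_apply, Finset.sum_neg_distrib, neg_le_neg_iff] using hsum

end Majorization

section Tight

variable {p : Finset α → ℤ} {m : α → ℤ}

def IsTight (p : Finset α → ℤ) (m : α → ℤ) (X : Finset α) : Prop :=
  ∑ s ∈ X, m s = p X

theorem isTight_empty (h0 : p ∅ = 0) : IsTight p m ∅ := by
  simp [IsTight, h0]

theorem IsTight.inter_union [Fintype α] [DecidableEq α] (hp : Supermodular p)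
    (hm : m ∈ Bdot p) {X Y : Finset α} (hX : IsTight p m X) (hY : IsTight p m Y) :
    IsTight p m (X ∩ Y) ∧ IsTight p m (X ∪ Y) := by
  have hsup := hp X Y
  have hinter := hm.1 (X ∩ Y)
  have hunion := hm.1 (X ∪ Y)
  have hmod : ∑ s ∈ X ∪ Y, m s + ∑ s ∈ X ∩ Y, m s = ∑ s ∈ X, m s + ∑ s ∈ Y, m s :=
    Finset.sum_union_inter
  unfold IsTight at *
  constructor <;> omega

def HasTightLevelSets (p : Finset α → ℤ) (m : α → ℤ) : Prop :=
  ∀ θ : ℤ, ∃ C : Finset α, IsTight p m C ∧ (∀ s, θ < m s → s ∈ C) ∧ ∀ s ∈ C, θ ≤ m s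

theorem HasTightLevelSets.excess_le [Fintype α] (hT : HasTightLevelSets p m) {y : α → ℤ}
    (hy : y ∈ Bdot p) (θ : ℤ) : excess m θ ≤ excess y θ := by
  obtain ⟨C, hC, hgt, hge⟩ := hT θ
  exact excess_le_excess_of_sum_le hgt hge (hC ▸ hy.1 C)

theorem HasTightLevelSets.deficit_le [Fintype α] [DecidableEq α] (hT : HasTightLevelSets p m)
    (hm : m ∈ Bdot p) {y : α → ℤ} (hy : y ∈ Bdot p) (θ : ℤ) : deficit m θ ≤ deficit y θ := by
  obtain ⟨C, hC, hgt, hge⟩ := hT θ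
  refine deficit_le_deficit_of_sum_le (K := Cᶜ) (fun s hs => Finset.mem_compl.2 fun hsC => ?_)
    (fun s hs => ?_) ?_
  · exact (hge s hsC).not_gt hs
  · exact not_lt.1 (mt (hgt s) (Finset.mem_compl.1 hs))
  · have hmC := Finset.sum_compl_add_sum C m
    have hyC := Finset.sum_compl_add_sum C y
    have hyC' := hy.1 C
    rw [hm.2] at hmC
    rw [hy.2] at hyC
    unfold IsTight at hC
    linarith

theorem hasTightLevelSets_of_chain [Fintype α] [DecidableEq α] (h0 : p ∅ = 0) {ℓ : ℕ}
    {C : ℕ → Finset α} (hC0 : C 0 = ∅) (hCℓ : C ℓ = Finset.univ)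
    (hC : ∀ i, 1 ≤ i → i ≤ ℓ → IsTight p m (C i) ∧ ∀ u ∈ C i, ∀ v, v ∉ C i → m v ≤ m u)
    (hnu : ∀ i, i < ℓ → ∀ u ∈ C (i + 1) \ C i, ∀ v ∈ C (i + 1) \ C i, m u ≤ m v + 1) :
    HasTightLevelSets p m := by
  classical
  intro θ
  have hex : ∃ j, j ≤ ℓ ∧ ∀ s, θ < m s → s ∈ C j :=
    ⟨ℓ, le_rfl, fun s _ => hCℓ ▸ Finset.mem_univ s⟩
  obtain ⟨j, ⟨hjℓ, hj⟩, hmin⟩ : ∃ j, (j ≤ ℓ ∧ ∀ s, θ < m s → s ∈ C j) ∧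
      ∀ i < j, ¬ (i ≤ ℓ ∧ ∀ s, θ < m s → s ∈ C i) :=
    ⟨Nat.find hex, Nat.find_spec hex, fun _ => Nat.find_min hex⟩
  rcases j with _ | i
  · exact ⟨C 0, hC0 ▸ isTight_empty h0, hj, by simp [hC0]⟩
  obtain ⟨a, ha, haC⟩ : ∃ a, θ < m a ∧ a ∉ C i := by
    have := hmin i i.lt_succ_self
    push Not at this
    exact this (by omega)
  refine ⟨C (i + 1), (hC _ (by omega) hjℓ).1, hj, fun v hv => ?_⟩
  by_cases hvC : v ∈ C i
  · have hi : 1 ≤ i := Nat.pos_of_ne_zero fun h => by simp [h, hC0] at hvC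
    have := (hC i hi (by omega)).2 v hvC a haC
    omega
  · have := hnu i (by omega) a (Finset.mem_sdiff.2 ⟨hj a ha, haC⟩) v
      (Finset.mem_sdiff.2 ⟨hv, hvC⟩)
    omega

end Tight

section Closure

variable [Fintype α] [DecidableEq α] {p : Finset α → ℤ} {m : α → ℤ}

def tightClosure (p : Finset α → ℤ) (m : α → ℤ) (X : Finset α) : Finset α :=
  ({Y | X ⊆ Y ∧ ∑ s ∈ Y, m s = p Y} : Finset (Finset α)).inf id

theorem subset_tightClosure (X : Finset α) : X ⊆ tightClosure p m X :=
  Finset.le_inf fun _ hY => (Finset.mem_filter.1 hY).2.1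

theorem tightClosure_subset {X Y : Finset α} (hXY : X ⊆ Y) (hY : IsTight p m Y) :
    tightClosure p m X ⊆ Y :=
  Finset.inf_le (f := id) (Finset.mem_filter.2 ⟨Finset.mem_univ _, hXY, hY⟩)

theorem tightClosure_mono {X X' : Finset α} (h : X ⊆ X') :
    tightClosure p m X ⊆ tightClosure p m X' :=
  Finset.le_inf fun _ hY => tightClosure_subset (h.trans (Finset.mem_filter.1 hY).2.1)
    (Finset.mem_filter.1 hY).2.2

theorem isTight_tightClosure (hp : Supermodular p) (hm : m ∈ Bdot p) (X : Finset α) :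
    IsTight p m (tightClosure p m X) :=
  Finset.inf_induction (p := IsTight p m) hm.2
    (fun _ hY _ hZ => (hY.inter_union hp hm hZ).1) fun _ hY => (Finset.mem_filter.1 hY).2.2

theorem exists_isTight_superset_not_mem (hp : Supermodular p) (h0 : p ∅ = 0)
    (hm : m ∈ Bdot p) {s : α} {X : Finset α}
    (h : ∀ t ∈ X, ∃ Y, IsTight p m Y ∧ t ∈ Y ∧ s ∉ Y) :
    ∃ Y, IsTight p m Y ∧ X ⊆ Y ∧ s ∉ Y := by
  induction X using Finset.induction_on with
  | empty => exact ⟨∅, isTight_empty h0, subset_rfl, Finset.notMem_empty s⟩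
  | insert a X _ ih =>
    obtain ⟨Ya, hYa, haYa, hsYa⟩ := h a (Finset.mem_insert_self a X)
    obtain ⟨Y, hY, hXY, hsY⟩ := ih fun t ht => h t (Finset.mem_insert_of_mem ht)
    refine ⟨Ya ∪ Y, (hYa.inter_union hp hm hY).2, ?_, by simp [hsYa, hsY]⟩
    exact Finset.insert_subset (Finset.mem_union_left _ haYa)
      (hXY.trans Finset.subset_union_right)

end Closure

section Tightening

variable [DecidableEq α] {p : Finset α → ℤ} {m : α → ℤ}

/-- `m + χ_s - χ_t`. -/
def moveUnit (m : α → ℤ) (s t : α) : α → ℤ :=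
  fun v => m v + (if v = s then 1 else 0) - (if v = t then 1 else 0)

theorem sum_moveUnit (s t : α) (X : Finset α) :
    ∑ v ∈ X, moveUnit m s t v =
      ∑ v ∈ X, m v + (if s ∈ X then 1 else 0) - (if t ∈ X then 1 else 0) := by
  simp only [moveUnit, Finset.sum_sub_distrib, Finset.sum_add_distrib, Finset.sum_ite_eq']

variable [Fintype α]

def HasTighteningStep (p : Finset α → ℤ) (m : α → ℤ) : Prop :=
  ∃ s t : α, m s + 2 ≤ m t ∧ moveUnit m s t ∈ Bdot p

theorem sum_comp_moveUnit {s t : α} (hst : s ≠ t) (g : ℤ → ℤ) :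
    ∑ v, g (moveUnit m s t v) =
      ∑ v, g (m v) + (g (m s + 1) - g (m s)) + (g (m t - 1) - g (m t)) := by
  have hdiff : ∑ v, (g (moveUnit m s t v) - g (m v)) =
      (g (m s + 1) - g (m s)) + (g (m t - 1) - g (m t)) := by
    rw [Fintype.sum_eq_add s t hst fun v hv => by simp [moveUnit, hv.1, hv.2]]
    simp [moveUnit, hst, hst.symm]
  rw [Finset.sum_sub_distrib] at hdiff
  linarith

theorem moveUnit_mem_bdot (hm : m ∈ Bdot p) {s t : α}
    (h : ∀ Y, IsTight p m Y → t ∈ Y → s ∈ Y) : moveUnit m s t ∈ Bdot p := by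
  refine ⟨fun X => ?_, ?_⟩
  · have hX := hm.1 X
    rw [sum_moveUnit]
    by_cases htX : t ∈ X
    · by_cases hsX : s ∈ X
      · simp [htX, hsX, hX]
      · have hnt : ∑ v ∈ X, m v ≠ p X := fun ht => hsX (h X ht htX)
        simp only [htX, hsX, if_true, if_false]
        omega
    · split_ifs <;> omega
  · rw [sum_moveUnit, hm.2]
    simp

theorem exists_isTight_mem_not_mem (hm : m ∈ Bdot p) (hA : ¬ HasTighteningStep p m) {s t : α}
    (hst : m s + 2 ≤ m t) : ∃ Y, IsTight p m Y ∧ t ∈ Y ∧ s ∉ Y := by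
  by_contra! H
  exact hA ⟨s, t, hst, moveUnit_mem_bdot hm H⟩

theorem sub_one_le_of_mem_tightClosure_superlevel (hp : Supermodular p) (h0 : p ∅ = 0)
    (hm : m ∈ Bdot p) (hA : ¬ HasTighteningStep p m) (θ : ℤ) :
    ∀ s ∈ tightClosure p m {v | θ ≤ m v}, θ - 1 ≤ m s := by
  intro s hs
  by_contra! hlt
  obtain ⟨Y, hY, hXY, hsY⟩ := exists_isTight_superset_not_mem hp h0 hm (X := {v | θ ≤ m v})
    fun t ht => exists_isTight_mem_not_mem hm hA (s := s) (by
      have := (Finset.mem_filter.1 ht).2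
      omega)
  exact hsY (tightClosure_subset hXY hY hs)

theorem excess_moveUnit_le {s t : α} (hst : m s + 2 ≤ m t) (θ : ℤ) :
    excess (moveUnit m s t) θ ≤ excess m θ := by
  have hne : s ≠ t := ne_of_apply_ne m (by omega)
  have := sum_comp_moveUnit (m := m) hne fun v => max (v - θ) 0
  simp only [excess]
  omega

theorem excess_moveUnit_lt {s t : α} (hst : m s + 2 ≤ m t) :
    excess (moveUnit m s t) (m t - 1) < excess m (m t - 1) := by
  have hne : s ≠ t := ne_of_apply_ne m (by omega)
  have := sum_comp_moveUnit (m := m) hne fun v => max (v - (m t - 1)) 0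
  simp only [excess]
  omega

theorem deficit_moveUnit_le {s t : α} (hst : m s + 2 ≤ m t) (θ : ℤ) :
    deficit (moveUnit m s t) θ ≤ deficit m θ := by
  have hne : s ≠ t := ne_of_apply_ne m (by omega)
  have := sum_comp_moveUnit (m := m) hne fun v => max (θ - v) 0
  simp only [deficit]
  omega

theorem deficit_moveUnit_lt {s t : α} (hst : m s + 2 ≤ m t) :
    deficit (moveUnit m s t) (m s + 1) < deficit m (m s + 1) := by
  have hne : s ≠ t := ne_of_apply_ne m (by omega)
  have := sum_comp_moveUnit (m := m) hne fun v => max (m s + 1 - v) 0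
  simp only [deficit]
  omega

end Tightening

theorem Finset.exists_ssubset_chain_of_monotone [DecidableEq α] (P Q : Finset α → Prop)
    {D : ℕ → Finset α} (hD0 : D 0 = ∅) (hmono : ∀ k, D k ⊆ D (k + 1)) (hP : ∀ k, P (D k))
    (hQ : ∀ k, Q (D (k + 1) \ D k)) (k : ℕ) :
    ∃ (ℓ : ℕ) (C : ℕ → Finset α), C 0 = ∅ ∧ C ℓ = D k ∧ (∀ i, i < ℓ → C i ⊂ C (i + 1)) ∧
      (∀ i, i ≤ ℓ → P (C i)) ∧ (∀ i, i < ℓ → Q (C (i + 1) \ C i)) := by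
  induction k with
  | zero => exact ⟨0, fun _ => D 0, hD0, rfl, by simp, fun _ _ => hP 0, by simp⟩
  | succ k ih =>
    obtain ⟨ℓ, C, hC0, hCℓ, hstrict, hCP, hCQ⟩ := ih
    by_cases hk : D (k + 1) = D k
    · exact ⟨ℓ, C, hC0, hCℓ.trans hk.symm, hstrict, hCP, hCQ⟩
    refine ⟨ℓ + 1, fun i => if i ≤ ℓ then C i else D (k + 1), by simpa using hC0, by simp,
      fun i hi => ?_, fun i hi => ?_, fun i hi => ?_⟩
    · rcases (Nat.lt_succ_iff.1 hi).lt_or_eq with hi | rfl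
      · simpa [hi.le, Nat.succ_le_of_lt hi] using hstrict i hi
      · simpa [hCℓ] using ssubset_of_subset_of_ne (hmono k) (Ne.symm hk)
    · dsimp only
      split_ifs with hiℓ
      exacts [hCP i hiℓ, hP _]
    · rcases (Nat.lt_succ_iff.1 hi).lt_or_eq with hi | rfl
      · simpa [hi.le, Nat.succ_le_of_lt hi] using hCQ i hi
      · simpa [hCℓ] using hQ k

theorem exists_chain_of_not_hasTighteningStep [Fintype α] [DecidableEq α] [Nonempty α]
    {p : Finset α → ℤ} {m : α → ℤ} (hp : Supermodular p) (h0 : p ∅ = 0) (hm : m ∈ Bdot p)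
    (hA : ¬ HasTighteningStep p m) :
    ∃ (ℓ : ℕ) (C : ℕ → Finset α), 1 ≤ ℓ ∧ C 0 = ∅ ∧ C ℓ = Finset.univ ∧
      (∀ i, i < ℓ → C i ⊂ C (i + 1)) ∧
      (∀ i, 1 ≤ i → i ≤ ℓ → IsTight p m (C i) ∧ ∀ u ∈ C i, ∀ v, v ∉ C i → m v ≤ m u) ∧
      (∀ i, i < ℓ → ∀ u ∈ C (i + 1) \ C i, ∀ v ∈ C (i + 1) \ C i, m u ≤ m v + 1) := by
  obtain ⟨B, hB⟩ := Finite.exists_le fun v => (m v).natAbs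
  set D : ℕ → Finset α := fun k => tightClosure p m {v | (B : ℤ) + 1 - k ≤ m v}
  have hlower (k : ℕ) (v : α) (hv : v ∉ D k) : m v < B + 1 - k := by
    by_contra! h
    exact hv (subset_tightClosure _ (Finset.mem_filter.2 ⟨Finset.mem_univ v, h⟩))
  have hupper (k : ℕ) (v : α) (hv : v ∈ D k) : B - k ≤ m v := by
    have := sub_one_le_of_mem_tightClosure_superlevel hp h0 hm hA _ v hv
    omega
  have hD0 : D 0 = ∅ := Finset.subset_empty.1 <| tightClosure_subset
    (fun v hv => by have := (Finset.mem_filter.1 hv).2; have := hB v; omega) (isTight_empty h0)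
  have hDuniv : D (2 * B + 1) = Finset.univ := Finset.eq_univ_of_forall fun v => by
    by_contra hv
    have := hlower _ v hv
    have := hB v
    omega
  have hmono (k : ℕ) : D k ⊆ D (k + 1) :=
    tightClosure_mono fun v hv => by
      simp only [Finset.mem_filter, Finset.mem_univ, true_and] at hv ⊢
      push_cast
      omega
  obtain ⟨ℓ, C, hC0, hCℓ, hstrict, hCP, hCQ⟩ := Finset.exists_ssubset_chain_of_monotone
    (fun X => IsTight p m X ∧ ∀ u ∈ X, ∀ v, v ∉ X → m v ≤ m u)
    (fun X => ∀ u ∈ X, ∀ v ∈ X, m u ≤ m v + 1) hD0 hmono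
    (fun k => ⟨isTight_tightClosure hp hm _, fun u hu v hv => by
      have := hupper k u hu; have := hlower k v hv; omega⟩)
    (fun k u hu v hv => by
      rw [Finset.mem_sdiff] at hu hv
      have := hupper (k + 1) v hv.1; have := hlower k u hu.2; push_cast at *; omega)
    (2 * B + 1)
  refine ⟨ℓ, C, Nat.one_le_iff_ne_zero.2 ?_, hC0, hCℓ.trans hDuniv, hstrict,
    fun i _ hi => hCP i hi, hCQ⟩
  rintro rfl
  exact Finset.univ_nonempty.ne_empty (hDuniv.symm.trans (hCℓ.symm.trans hC0))

/-- Theorem (equivalence of local and global decreasing minimality):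
(A) no 1-tightening step exists for `m`;
(B) there is a chain of `m`-tight and `m`-top sets with near-uniform difference sets;
(C1) `m` is decreasingly minimal in `Ḃ(p)`;
(C2) `m` is increasingly maximal in `Ḃ(p)`. -/
theorem stmt0 [Fintype α] [DecidableEq α] [Nonempty α]
    (p : Finset α → ℤ) (hp : Supermodular p) (h0 : p ∅ = 0)
    (m : α → ℤ) (hm : m ∈ Bdot p) :
    List.TFAE
      [ -- (A): no 1-tightening step
        ¬ ∃ s t : α, m s + 2 ≤ m t ∧
          (fun v => m v + (if v = s then 1 else 0) - (if v = t then 1 else 0)) ∈ Bdot p,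
        -- (B): chain of m-tight, m-top sets with near-uniform difference sets
        ∃ (ℓ : ℕ) (C : ℕ → Finset α), 1 ≤ ℓ ∧ C 0 = ∅ ∧ C ℓ = Finset.univ ∧
          (∀ i, i < ℓ → C i ⊂ C (i + 1)) ∧
          (∀ i, 1 ≤ i → i ≤ ℓ →
            (∑ s ∈ C i, m s = p (C i)) ∧
            (∀ u ∈ C i, ∀ v, v ∉ C i → m v ≤ m u)) ∧
          (∀ i, i < ℓ → ∀ u ∈ C (i + 1) \ C i, ∀ v ∈ C (i + 1) \ C i, m u ≤ m v + 1),
        -- (C1): m is decreasingly minimal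
        ∀ y ∈ Bdot p, DecLE m y,
        -- (C2): m is increasingly maximal
        ∀ y ∈ Bdot p, IncLE y m ] := by
  tfae_have 1 → 2 := exists_chain_of_not_hasTighteningStep hp h0 hm
  tfae_have 2 → 3 := by
    rintro ⟨ℓ, C, -, hC0, hCℓ, -, hC, hnu⟩ y hy
    exact decLE_of_forall_excess_le
      ((hasTightLevelSets_of_chain h0 hC0 hCℓ hC hnu).excess_le hy)
  tfae_have 2 → 4 := by
    rintro ⟨ℓ, C, -, hC0, hCℓ, -, hC, hnu⟩ y hy
    exact incLE_of_forall_deficit_le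
      ((hasTightLevelSets_of_chain h0 hC0 hCℓ hC hnu).deficit_le hm hy)
  tfae_have 3 → 1 := by
    rintro hdec ⟨s, t, hst, hmem⟩
    exact not_decLE_of_excess_lt (excess_moveUnit_le hst) (excess_moveUnit_lt hst) (hdec _ hmem)
  tfae_have 4 → 1 := by
    rintro hinc ⟨s, t, hst, hmem⟩
    exact not_incLE_of_deficit_lt (deficit_moveUnit_le hst) (deficit_moveUnit_lt hst)
      (hinc _ hmem)
  tfae_finish
end

section
/- Let p be an integer-valued supermodular set-function on the subsets of a nonempty finite set S with p(∅) = 0, and assume Ḃ(p) is nonempty. Then for every integer k with 1 ≤ k ≤ n, every decreasingly minimal element m of Ḃ(p) minimizes the sum of the k largest components over Ḃ(p); that is, Σ_{j=1}^{k} m↓(j) ≤ Σ_{j=1}^{k} y↓(j) for every y ∈ Ḃ(p). -/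
open Finset

variable {α : Type*}

/-!
Let `y ∈ Ḃ(p)` differ from the dec-min element `m`. Choose `s` with `m s < y s` and `y s` largest;
the exchange property of `Ḃ(p)` gives `t` with `y t < m t` and `y - χ_s + χ_t ∈ Ḃ(p)`.
Dec-minimality forces `y t < y s`, since a unit transfer across a gap of at least two lowers no
sum of the `k` largest values and strictly lowers one of them. A transfer from a larger to a
smaller value never increases such a sum, and it brings `y` closer to `m` in `ℓ¹`, so induction
on that distance concludes.
-/

theorem sum_le_sum_of_card_eq_of_forall_le (x : α → ℤ) {B C : Finset α} (hcard : #B = #C)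
    (hle : ∀ u ∈ B, ∀ v ∈ C, x u ≤ x v) : ∑ u ∈ B, x u ≤ ∑ u ∈ C, x u := by
  rcases C.eq_empty_or_nonempty with rfl | hC
  · rw [card_empty, card_eq_zero] at hcard
    simp [hcard]
  obtain ⟨w, hw, hmin⟩ := C.exists_min_image x hC
  calc ∑ u ∈ B, x u ≤ #B • x w := B.sum_le_card_nsmul x _ fun u hu => hle u hu w hw
    _ = #C • x w := by rw [hcard]
    _ ≤ ∑ u ∈ C, x u := C.card_nsmul_le_sum x _ hmin

section SumCompare

variable [DecidableEq α]

theorem sum_le_sum_of_card_eq (x : α → ℤ) {X A : Finset α} (hcard : #X = #A)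
    (hle : ∀ u ∈ X \ A, ∀ v ∈ A \ X, x u ≤ x v) : ∑ u ∈ X, x u ≤ ∑ u ∈ A, x u := by
  have hdiff : #(X \ A) = #(A \ X) := by
    have h₁ := card_sdiff_add_card_inter X A
    have h₂ := card_sdiff_add_card_inter A X
    rw [inter_comm] at h₂
    omega
  rw [← sum_inter_add_sum_sdiff X A, ← sum_inter_add_sum_sdiff A X, inter_comm]
  exact add_le_add le_rfl (sum_le_sum_of_card_eq_of_forall_le x hdiff hle)

end SumCompare

section TopSum

variable [Fintype α]

def topSum (x : α → ℤ) (k : ℕ) : ℤ :=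
  ((sortedDesc x).take k).sum

theorem length_sortedDesc (x : α → ℤ) : (sortedDesc x).length = Fintype.card α := by
  rw [sortedDesc, List.length_reverse, Multiset.length_sort, Multiset.card_map, card_val,
    card_univ]

theorem pairwise_sortedDesc (x : α → ℤ) : (sortedDesc x).Pairwise (· ≥ ·) := by
  rw [sortedDesc, List.pairwise_reverse]
  exact Multiset.pairwise_sort _ _

theorem exists_perm_univ_sortedDesc_eq_map (x : α → ℤ) :
    ∃ l : List α, l.Perm Finset.univ.toList ∧ l.Pairwise (fun u v => x v ≤ x u) ∧
      sortedDesc x = l.map x := by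
  have hperm : (sortedDesc x).Perm (Finset.univ.toList.map x) := by
    rw [← Multiset.coe_eq_coe, ← Multiset.map_coe, Finset.coe_toList, sortedDesc,
      Multiset.coe_reverse, Multiset.sort_eq]
  obtain ⟨l, hl, hlperm⟩ : Relation.Comp (· = ·.map x) List.Perm (sortedDesc x) univ.toList := by
    rwa [List.eq_map_comp_perm]
  refine ⟨l, hlperm, ?_, hl⟩
  have := pairwise_sortedDesc x
  rwa [hl, List.pairwise_map] at this

variable [DecidableEq α]

theorem exists_card_eq_sum_eq_topSum (x : α → ℤ) {k : ℕ} (hk : k ≤ Fintype.card α) :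
    ∃ A : Finset α, #A = k ∧ ∑ u ∈ A, x u = topSum x k ∧ ∀ u ∈ A, ∀ v ∉ A, x v ≤ x u := by
  obtain ⟨l, hperm, hsorted, hx⟩ := exists_perm_univ_sortedDesc_eq_map x
  have hnodup : l.Nodup := hperm.nodup_iff.2 (Finset.nodup_toList _)
  have hlen : l.length = Fintype.card α := by rw [hperm.length_eq, Finset.length_toList, card_univ]
  refine ⟨(l.take k).toFinset, ?_, ?_, ?_⟩
  · rw [List.toFinset_card_of_nodup (hnodup.sublist (List.take_sublist _ _)), List.length_take,
      hlen, min_eq_left hk]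
  · rw [List.sum_toFinset _ (hnodup.sublist (List.take_sublist _ _)), List.map_take, topSum, hx]
  · intro u hu v hv
    rw [← List.take_append_drop k l, List.pairwise_append] at hsorted
    have hvl : v ∈ l := hperm.mem_iff.2 (Finset.mem_toList.2 (mem_univ v))
    rw [← List.take_append_drop k l, List.mem_append] at hvl
    exact hsorted.2.2 u (List.mem_toFinset.1 hu) v (hvl.resolve_left (by simpa using hv))

theorem sum_le_topSum (x : α → ℤ) (X : Finset α) : ∑ u ∈ X, x u ≤ topSum x #X := by
  obtain ⟨A, hA, hsum, htop⟩ := exists_card_eq_sum_eq_topSum x (card_le_univ X)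
  rw [← hsum]
  exact sum_le_sum_of_card_eq x hA.symm fun u hu v hv =>
    htop v (mem_sdiff.1 hv).1 u (mem_sdiff.1 hu).2

theorem topSum_le_of_forall_sum_le (x : α → ℤ) {k : ℕ} (hk : k ≤ Fintype.card α) {c : ℤ}
    (h : ∀ X : Finset α, #X = k → ∑ u ∈ X, x u ≤ c) : topSum x k ≤ c := by
  obtain ⟨A, hA, hsum, -⟩ := exists_card_eq_sum_eq_topSum x hk
  exact hsum ▸ h A hA

end TopSum

section Transfer

variable [DecidableEq α]

def transfer (x : α → ℤ) (s t : α) : α → ℤ :=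
  x - Pi.single s 1 + Pi.single t 1

theorem sum_transfer (x : α → ℤ) (s t : α) (X : Finset α) :
    ∑ u ∈ X, transfer x s t u
      = ∑ u ∈ X, x u - (if s ∈ X then 1 else 0) + (if t ∈ X then 1 else 0) := by
  simp only [transfer, Pi.add_apply, Pi.sub_apply, sum_add_distrib, sum_sub_distrib,
    sum_pi_single']

theorem transfer_apply (x : α → ℤ) (s t u : α) :
    transfer x s t u = x u - (if u = s then 1 else 0) + (if u = t then 1 else 0) := by
  simp only [transfer, Pi.add_apply, Pi.sub_apply, Pi.single_apply]

variable [Fintype α]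

theorem topSum_transfer_le (y : α → ℤ) {s t : α} (h : y t < y s) {k : ℕ}
    (hk : k ≤ Fintype.card α) : topSum (transfer y s t) k ≤ topSum y k := by
  refine topSum_le_of_forall_sum_le _ hk fun X hX => ?_
  rw [sum_transfer]
  by_cases hswap : t ∈ X ∧ s ∉ X
  · obtain ⟨htX, hsX⟩ := hswap
    have hs' : s ∉ X.erase t := fun hs => hsX (mem_of_mem_erase hs)
    have hcard : #(insert s (X.erase t)) = k := by
      rw [card_insert_of_notMem hs', card_erase_of_mem htX, hX]
      have := card_pos.2 ⟨t, htX⟩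
      omega
    have hsum := sum_le_topSum y (insert s (X.erase t))
    rw [hcard, sum_insert hs', sum_erase_eq_sub htX] at hsum
    simp only [htX, hsX, if_true, if_false]
    linarith
  · have hsum := sum_le_topSum y X
    have hind : (if t ∈ X then (1 : ℤ) else 0) ≤ if s ∈ X then 1 else 0 := by
      split_ifs <;> simp_all
    rw [hX] at hsum
    linarith

/-- The witness is `k = #{u | y s ≤ y u}`: after the transfer fewer than `k` values reach `y s`,
and the rest are at most `y s - 1`. -/
theorem exists_topSum_transfer_lt (y : α → ℤ) {s t : α} (h : y t + 2 ≤ y s) :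
    ∃ k ≤ Fintype.card α, topSum (transfer y s t) k < topSum y k := by
  set T := univ.filter fun u => y s ≤ y u
  have hsT : s ∈ T := by simp [T]
  have htT : t ∉ T := by simp [T]; omega
  have hts : t ≠ s := by rintro rfl; omega
  refine ⟨#T, card_le_univ T, ?_⟩
  obtain ⟨A, hA, hsum, -⟩ := exists_card_eq_sum_eq_topSum (transfer y s t) (card_le_univ T)
  have hAT : ∑ u ∈ A, transfer y s t u ≤ ∑ u ∈ T, transfer y s t u := by
    refine sum_le_sum_of_card_eq _ hA fun u hu v hv => ?_
    have hu : u ∉ T := (mem_sdiff.1 hu).2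
    have hv : y s ≤ y v := (mem_filter.1 (mem_sdiff.1 hv).1).2
    have hu' : y u < y s := by simpa [T] using hu
    rw [transfer_apply, transfer_apply]
    split_ifs <;> subst_vars <;> omega
  rw [sum_transfer y s t T, if_pos hsT, if_neg htT] at hAT
  have := sum_le_topSum y T
  linarith

end Transfer

theorem exists_sum_take_lt_of_lex {l l' : List ℤ} (h : List.Lex (· < ·) l l')
    (hlen : l.length = l'.length) : ∃ j ≤ l.length, (l.take j).sum < (l'.take j).sum := by
  induction h with
  | nil => simp at hlen
  | @rel a l b l' hab => exact ⟨1, by simp, by simpa using hab⟩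
  | @cons a l l' _ ih =>
    obtain ⟨j, hj, hsum⟩ := ih (by simpa using hlen)
    exact ⟨j + 1, by simpa using hj, by simpa using hsum⟩

theorem not_decLE_of_topSum [Fintype α] {x y : α → ℤ}
    (hle : ∀ k ≤ Fintype.card α, topSum y k ≤ topSum x k)
    (hlt : ∃ k, topSum y k < topSum x k) : ¬ DecLE x y := by
  obtain ⟨k, hk⟩ := hlt
  rintro (heq | hlex)
  · exact hk.ne (by rw [topSum, topSum, heq])
  · obtain ⟨j, hj, hsum⟩ := exists_sum_take_lt_of_lex hlex
      (by rw [length_sortedDesc, length_sortedDesc])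
    exact (hle j (length_sortedDesc x ▸ hj)).not_gt hsum

section Exchange

variable [Fintype α] [DecidableEq α] {p : Finset α → ℤ} {x : α → ℤ}

theorem tight_inter (hp : Supermodular p) (hx : x ∈ Bdot p) {X Y : Finset α}
    (hX : ∑ u ∈ X, x u = p X) (hY : ∑ u ∈ Y, x u = p Y) :
    ∑ u ∈ X ∩ Y, x u = p (X ∩ Y) := by
  have hsum : ∑ u ∈ X ∪ Y, x u + ∑ u ∈ X ∩ Y, x u = ∑ u ∈ X, x u + ∑ u ∈ Y, x u :=
    sum_union_inter
  have := hp X Y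
  have := hx.1 (X ∩ Y)
  have := hx.1 (X ∪ Y)
  omega

theorem exists_min_tight (hp : Supermodular p) (hx : x ∈ Bdot p) (s : α) :
    ∃ T : Finset α, s ∈ T ∧ ∑ u ∈ T, x u = p T ∧
      ∀ X : Finset α, s ∈ X → ∑ u ∈ X, x u = p X → T ⊆ X := by
  set F := univ.filter fun X : Finset α => s ∈ X ∧ ∑ u ∈ X, x u = p X
  have hF : F.Nonempty := ⟨univ, by simpa [F] using hx.2⟩
  have hT : F.inf' hF id ∈ {X : Finset α | s ∈ X ∧ ∑ u ∈ X, x u = p X} :=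
    inf'_mem _ (fun X hX Y hY => show s ∈ X ∩ Y ∧ _ from
      ⟨mem_inter.2 ⟨hX.1, hY.1⟩, tight_inter hp hx hX.2 hY.2⟩)
      F hF id fun X hX => (mem_filter.1 hX).2
  exact ⟨_, hT.1, hT.2, fun X hs hX => inf'_le id (mem_filter.2 ⟨mem_univ X, hs, hX⟩)⟩

theorem transfer_mem_Bdot (hx : x ∈ Bdot p) {s t : α}
    (h : ∀ X : Finset α, s ∈ X → t ∉ X → ∑ u ∈ X, x u ≠ p X) : transfer x s t ∈ Bdot p := by
  refine ⟨fun X => ?_, ?_⟩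
  · have hX := hx.1 X
    rw [sum_transfer]
    by_cases hsX : s ∈ X <;> by_cases htX : t ∈ X
    · simp only [hsX, htX, if_true]; omega
    · have := h X hsX htX
      simp only [hsX, htX, if_true, if_false]; omega
    · simp only [hsX, htX, if_true, if_false]; omega
    · simp only [hsX, htX, if_false]; omega
  · simp [sum_transfer, hx.2]

/-- Exchange property of `Bdot p`: `t` is taken in the smallest `x`-tight set containing `s`. -/
theorem exists_transfer_mem_Bdot (hp : Supermodular p) (hx : x ∈ Bdot p) {z : α → ℤ}
    (hz : z ∈ Bdot p) {s : α} (hs : z s < x s) :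
    ∃ t, x t < z t ∧ transfer x s t ∈ Bdot p := by
  obtain ⟨T, hsT, hT, hmin⟩ := exists_min_tight hp hx s
  have hlt : ∑ u ∈ T.erase s, x u < ∑ u ∈ T.erase s, z u := by
    rw [sum_erase_eq_sub hsT, sum_erase_eq_sub hsT]
    have := hz.1 T
    omega
  obtain ⟨t, htT, ht⟩ := exists_lt_of_sum_lt hlt
  exact ⟨t, ht, transfer_mem_Bdot hx fun X hsX htX hX =>
    htX (hmin X hsX hX (mem_of_mem_erase htT))⟩

end Exchange

section DecMin

variable [Fintype α] [DecidableEq α] {p : Finset α → ℤ} {m : α → ℤ}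

theorem DecMin.le_add_one_of_transfer_mem (hm : DecMin p m) {s t : α}
    (h : transfer m s t ∈ Bdot p) : m s ≤ m t + 1 := by
  by_contra! hgap
  obtain ⟨k, -, hk⟩ := exists_topSum_transfer_lt m (s := s) (t := t) (by omega)
  exact not_decLE_of_topSum (fun k hk => topSum_transfer_le m (by omega) hk) ⟨k, hk⟩ (hm.2 _ h)

/-- `s` maximizes `y` among the coordinates where `y` exceeds `m`; were `y s ≤ y t`, exchanging
`m` at `t` would give a transfer of `m` across a gap of at least two. -/
theorem DecMin.exists_transfer_toward (hp : Supermodular p) (hm : DecMin p m) {y : α → ℤ}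
    (hy : y ∈ Bdot p) (hne : m ≠ y) :
    ∃ s t, y t < y s ∧ m s < y s ∧ y t < m t ∧ transfer y s t ∈ Bdot p := by
  have hP : (univ.filter fun u => m u < y u).Nonempty := by
    by_contra! hP
    have hle : ∀ u ∈ univ, y u ≤ m u := fun u _ => by
      by_contra! hu
      exact (filter_eq_empty_iff.1 hP) (mem_univ u) hu
    obtain ⟨u, hu⟩ := Function.ne_iff.1 hne
    have := sum_lt_sum hle ⟨u, mem_univ u, lt_of_le_of_ne (hle u (mem_univ u)) hu.symm⟩
    rw [hy.2, hm.1.2] at this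
    exact this.false
  obtain ⟨s, hsP, hsmax⟩ := exists_max_image _ y hP
  have hs : m s < y s := (mem_filter.1 hsP).2
  obtain ⟨t, ht, hmem⟩ := exists_transfer_mem_Bdot hp hy hm.1 hs
  refine ⟨s, t, ?_, hs, ht, hmem⟩
  by_contra! hst
  obtain ⟨u, hu, hmem'⟩ := exists_transfer_mem_Bdot hp hm.1 hy ht
  have := hm.le_add_one_of_transfer_mem hmem'
  have := hsmax u (mem_filter.2 ⟨mem_univ u, hu⟩)
  omega

end DecMin

theorem sum_natAbs_sub_transfer_lt [Fintype α] [DecidableEq α] {m y : α → ℤ} {s t : α}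
    (hs : m s < y s) (ht : y t < m t) :
    ∑ u, (m u - transfer y s t u).natAbs < ∑ u, (m u - y u).natAbs := by
  have hst : s ≠ t := by rintro rfl; omega
  refine sum_lt_sum (fun u _ => ?_) ⟨s, mem_univ s, ?_⟩
  · rw [transfer_apply]
    split_ifs with hus hut
    · exact absurd (hus.symm.trans hut) hst
    all_goals subst_vars; omega
  · rw [transfer_apply, if_pos rfl, if_neg hst]
    omega

theorem stmt1_general [Fintype α] [DecidableEq α]
    (p : Finset α → ℤ) (hp : Supermodular p)
    (m : α → ℤ) (hm : DecMin p m)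
    (k : ℕ) (hk2 : k ≤ Fintype.card α)
    (y : α → ℤ) (hy : y ∈ Bdot p) :
    ((sortedDesc m).take k).sum ≤ ((sortedDesc y).take k).sum := by
  change topSum m k ≤ topSum y k
  induction hN : ∑ u, (m u - y u).natAbs using Nat.strong_induction_on generalizing y with
  | _ N ih =>
    by_cases hmy : m = y
    · rw [hmy]
    obtain ⟨s, t, hts, hs, ht, hmem⟩ := hm.exists_transfer_toward hp hy hmy
    calc topSum m k ≤ topSum (transfer y s t) k :=
          ih _ (hN ▸ sum_natAbs_sub_transfer_lt hs ht) _ hmem rfl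
      _ ≤ topSum y k := topSum_transfer_le y hts hk2

/-- Every dec-min element of `Ḃ(p)` minimizes the sum of the `k` largest components. -/
theorem stmt1 [Fintype α] [DecidableEq α] [Nonempty α]
    (p : Finset α → ℤ) (hp : Supermodular p) (h0 : p ∅ = 0)
    (hne : (Bdot p).Nonempty)
    (m : α → ℤ) (hm : DecMin p m)
    (k : ℕ) (hk1 : 1 ≤ k) (hk2 : k ≤ Fintype.card α)
    (y : α → ℤ) (hy : y ∈ Bdot p) :
    ((sortedDesc m).take k).sum ≤ ((sortedDesc y).take k).sum :=
  stmt1_general p hp m hm k hk2 y hy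
end
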